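/- arXiv:0909.5482 — 4 statements merged into one kernel-verified Lean document; each statement's English description precedes it below -/
import Mathlib

section
/- Let ε(N) ∈ (0,1) be defined for large N by the condition that the expected partition size under the uniform grandcanonical ensemble equals N^2, i.e., ∑_{m=1}^∞ ε(N)^m/(1-ε(N)^m)^2 = N^2. Then ε(N) = 1 - α/N + O(log N / N^2) as N → ∞, where α = π/√6. -/
/-!
Write `ε = exp (-t)`. The expected size is then `∑_{m ≥ 1} k (m t)` with
`k x = exp (-x) / (1 - exp (-x))^2 = 1 / (4 sinh² (x/2))`. From `y ≤ sinh y ≤ y cosh y` the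
correction `1/x² - k x` lies between `0` and `min (1/4) (1/x²) ≤ 3 / (1 + x)²`, so comparing with
`ζ(2) = π²/6` gives `π²/(6t²) - 3/t ≤ N² ≤ π²/(6t²)`. Hence `t = α/N + O(1/N²)`, and
`ε = 1 - t + O(t²) = 1 - α/N + O(1/N²)`.
-/

open Real Filter Asymptotics

lemma Real.sinh_le_mul_cosh {y : ℝ} (hy : 0 ≤ y) : sinh y ≤ y * cosh y := by
  have hderiv (x : ℝ) : HasDerivAt (fun x => x * cosh x - sinh x) (x * sinh x) x :=
    (((hasDerivAt_id' x).fun_mul (hasDerivAt_cosh x)).fun_sub (hasDerivAt_sinh x)).congr_deriv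
      (by ring)
  have hmono : MonotoneOn (fun x => x * cosh x - sinh x) (Set.Ici 0) := by
    refine monotoneOn_of_deriv_nonneg (convex_Ici 0)
      (fun x _ => (hderiv x).continuousAt.continuousWithinAt)
      (fun x _ => (hderiv x).differentiableAt.differentiableWithinAt) fun x hx => ?_
    rw [interior_Ici, Set.mem_Ioi] at hx
    rw [(hderiv x).deriv]
    exact mul_nonneg hx.le (sinh_nonneg_iff.mpr hx.le)
  simpa using hmono Set.self_mem_Ici hy hy

lemma Real.one_sub_exp_neg_eq_mul_sinh (x : ℝ) :
    1 - exp (-x) = 2 * exp (-(x / 2)) * sinh (x / 2) := by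
  rw [sinh_eq, show -x = -(x / 2) + -(x / 2) by ring, exp_add]
  have := exp_add (x / 2) (-(x / 2))
  rw [add_neg_cancel, exp_zero] at this
  linear_combination this

noncomputable def sizeKernel (x : ℝ) : ℝ := exp (-x) / (1 - exp (-x)) ^ 2

lemma sizeKernel_nonneg (x : ℝ) : 0 ≤ sizeKernel x := by
  unfold sizeKernel; positivity

lemma sizeKernel_eq {x : ℝ} (hx : x ≠ 0) : sizeKernel x = 1 / (4 * sinh (x / 2) ^ 2) := by
  have hs : sinh (x / 2) ≠ 0 := by simpa using hx
  rw [sizeKernel, one_sub_exp_neg_eq_mul_sinh, show -x = -(x / 2) + -(x / 2) by ring, exp_add]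
  field_simp
  ring

lemma sizeKernel_le {x : ℝ} (hx : 0 < x) : sizeKernel x ≤ 1 / x ^ 2 := by
  rw [sizeKernel_eq hx.ne']
  have : x / 2 ≤ sinh (x / 2) := self_le_sinh_iff.mpr (by positivity)
  gcongr
  nlinarith

lemma inv_sq_sub_sizeKernel_le {x : ℝ} (hx : 0 < x) : 1 / x ^ 2 - sizeKernel x ≤ 1 / 4 := by
  rw [sizeKernel_eq hx.ne']
  set y := x / 2
  have hy : 0 < y := by positivity
  have hs : y ≤ sinh y := self_le_sinh_iff.mpr hy.le
  have hsc : sinh y ≤ y * cosh y := sinh_le_mul_cosh hy.le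
  have hsq : sinh y ^ 2 ≤ y ^ 2 * (1 + sinh y ^ 2) := by
    rw [← cosh_sq', ← mul_pow]; exact pow_le_pow_left₀ (by linarith) hsc 2
  rw [show x = 2 * y by ring, div_sub_div _ _ (by positivity) (by positivity),
    div_le_div_iff₀ (by positivity) (by norm_num)]
  nlinarith

lemma inv_sq_sub_sizeKernel_le_three_div {x : ℝ} (hx : 0 < x) :
    1 / x ^ 2 - sizeKernel x ≤ 3 / (1 + x) ^ 2 := by
  rcases le_total x 2 with hx2 | hx2
  · calc 1 / x ^ 2 - sizeKernel x ≤ 1 / 4 := inv_sq_sub_sizeKernel_le hx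
      _ ≤ 3 / (1 + x) ^ 2 := by
        rw [div_le_div_iff₀ (by norm_num) (by positivity)]; nlinarith
  · calc 1 / x ^ 2 - sizeKernel x ≤ 1 / x ^ 2 := by linarith [sizeKernel_nonneg x]
      _ ≤ 3 / (1 + x) ^ 2 := by
        rw [div_le_div_iff₀ (by positivity) (by positivity)]; nlinarith

lemma hasSum_one_div_succ_mul_sq (t : ℝ) :
    HasSum (fun m : ℕ => 1 / (((m : ℝ) + 1) * t) ^ 2) (π ^ 2 / 6 / t ^ 2) := by
  have h := ((hasSum_nat_add_iff' 1).mpr hasSum_zeta_two).div_const (t ^ 2)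
  have hterm : (fun m : ℕ => 1 / (((m : ℝ) + 1) * t) ^ 2) =
      fun m => 1 / ((m + 1 : ℕ) : ℝ) ^ 2 / t ^ 2 := by
    ext m; push_cast; rw [mul_pow, div_div]
  rw [Finset.sum_range_one, Nat.cast_zero, zero_pow two_ne_zero, div_zero, sub_zero] at h
  rwa [hterm]

lemma tsum_one_div_one_add_succ_mul_sq_le {t : ℝ} (ht : 0 < t) :
    ∑' m : ℕ, 1 / (1 + ((m : ℝ) + 1) * t) ^ 2 ≤ 1 / t := by
  set a : ℕ → ℝ := fun m => 1 / t * (1 / (1 + m * t))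
  have hstep (m : ℕ) : 1 / (1 + ((m : ℝ) + 1) * t) ^ 2 ≤ a m - a (m + 1) := by
    have h1 : 0 < 1 + (m : ℝ) * t := by positivity
    have h2 : 0 < 1 + ((m : ℝ) + 1) * t := by positivity
    have hdiff : a m - a (m + 1) = 1 / ((1 + m * t) * (1 + ((m : ℝ) + 1) * t)) := by
      simp only [a]; push_cast; field_simp; ring
    rw [hdiff, sq]
    gcongr
    linarith
  refine Real.tsum_le_of_sum_range_le (fun m => by positivity) fun n => ?_
  calc ∑ m ∈ Finset.range n, 1 / (1 + ((m : ℝ) + 1) * t) ^ 2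
      ≤ ∑ m ∈ Finset.range n, (a m - a (m + 1)) := Finset.sum_le_sum fun m _ => hstep m
    _ = a 0 - a n := Finset.sum_range_sub' a n
    _ ≤ 1 / t := by simp only [a]; push_cast; simp; positivity

noncomputable def expectedSize (q : ℝ) : ℝ := ∑' m : ℕ, q ^ (m + 1) / (1 - q ^ (m + 1)) ^ 2

lemma expectedSize_exp_neg (t : ℝ) :
    expectedSize (exp (-t)) = ∑' m : ℕ, sizeKernel (((m : ℝ) + 1) * t) := by
  unfold expectedSize sizeKernel
  congr! 3 with m <;> rw [← exp_nat_mul] <;> push_cast <;> ring_nf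

lemma expectedSize_exp_neg_bounds {t : ℝ} (ht : 0 < t) :
    π ^ 2 / 6 / t ^ 2 - 3 / t ≤ expectedSize (exp (-t)) ∧
      expectedSize (exp (-t)) ≤ π ^ 2 / 6 / t ^ 2 := by
  have hpos (m : ℕ) : 0 < ((m : ℝ) + 1) * t := by positivity
  have hinv := hasSum_one_div_succ_mul_sq t
  have hkernel : Summable fun m : ℕ => sizeKernel (((m : ℝ) + 1) * t) :=
    hinv.summable.of_nonneg_of_le (fun m => sizeKernel_nonneg _) fun m => sizeKernel_le (hpos m)
  have hdom : Summable fun m : ℕ => 1 / (1 + ((m : ℝ) + 1) * t) ^ 2 :=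
    hinv.summable.of_nonneg_of_le (fun m => by positivity) fun m => by
      gcongr; linarith
  rw [expectedSize_exp_neg, ← hinv.tsum_eq]
  refine ⟨?_, hkernel.tsum_le_tsum (fun m => sizeKernel_le (hpos m)) hinv.summable⟩
  have hcorr : ∑' m : ℕ, (1 / (((m : ℝ) + 1) * t) ^ 2 - sizeKernel (((m : ℝ) + 1) * t)) ≤ 3 / t :=
    calc _ ≤ ∑' m : ℕ, 3 / (1 + ((m : ℝ) + 1) * t) ^ 2 :=
          Summable.tsum_le_tsum (fun m => inv_sq_sub_sizeKernel_le_three_div (hpos m))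
            (hinv.summable.sub hkernel) (hdom.mul_left 3 |>.congr fun m => mul_one_div _ _)
      _ = 3 * ∑' m : ℕ, 1 / (1 + ((m : ℝ) + 1) * t) ^ 2 := by
        rw [← tsum_mul_left]; simp_rw [mul_one_div]
      _ ≤ 3 * (1 / t) := by gcongr; exact tsum_one_div_one_add_succ_mul_sq_le ht
      _ = 3 / t := mul_one_div _ _
  rw [hinv.summable.tsum_sub hkernel] at hcorr
  linarith

lemma mem_Icc_div_of_sq_div_sq_bounds {a c t n : ℝ} (ha : 0 < a) (ht : 0 < t) (hn : 0 < n)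
    (hlow : a ^ 2 / t ^ 2 - c / t ≤ n ^ 2) (hup : n ^ 2 ≤ a ^ 2 / t ^ 2) :
    t ∈ Set.Icc (a / n - c / n ^ 2) (a / n) := by
  rw [le_div_iff₀ (by positivity)] at hup
  rw [show a ^ 2 / t ^ 2 - c / t = (a ^ 2 - c * t) / t ^ 2 by field_simp,
    div_le_iff₀ (by positivity)] at hlow
  have hnt : n * t ≤ a := by nlinarith
  have hc : 0 ≤ c := by nlinarith
  have hmul : (a - n * t) * a ≤ c * a / n := by
    calc (a - n * t) * a ≤ (a - n * t) * (a + n * t) :=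
          mul_le_mul_of_nonneg_left (by nlinarith [mul_pos hn ht]) (by linarith)
      _ ≤ c * t := by nlinarith
      _ ≤ c * a / n := by rw [le_div_iff₀ hn]; nlinarith
  have hgap : a - n * t ≤ c / n := by
    rw [mul_div_right_comm] at hmul; exact le_of_mul_le_mul_right hmul ha
  constructor
  · rw [sub_le_iff_le_add, div_le_iff₀ hn, add_mul, pow_two, ← div_div, div_mul_cancel₀ _ hn.ne']
    linarith
  · rw [le_div_iff₀ hn]; linarith

lemma abs_sub_one_sub_le_of_expectedSize_eq {q n : ℝ} (hq : q ∈ Set.Ioo 0 1)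
    (hn : π / √6 ≤ n) (h : expectedSize q = n ^ 2) :
    |q - (1 - π / √6 / n)| ≤ (π ^ 2 / 6 + 3) / n ^ 2 := by
  set α := π / √6
  have hα : 0 < α := by positivity
  have hα2 : α ^ 2 = π ^ 2 / 6 := by rw [div_pow, sq_sqrt (by norm_num)]
  have hn0 : 0 < n := hα.trans_le hn
  obtain ⟨hq0, hq1⟩ := hq
  set t := -log q
  have ht : 0 < t := neg_pos.mpr (log_neg hq0 hq1)
  have hqt : q = exp (-t) := by rw [neg_neg, exp_log hq0]
  have hbounds := expectedSize_exp_neg_bounds ht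
  rw [← hqt, h, ← hα2] at hbounds
  obtain ⟨hlo, hhi⟩ := mem_Icc_div_of_sq_div_sq_bounds hα ht hn0 hbounds.1 hbounds.2
  have ht1 : |-t| ≤ 1 := by
    rw [abs_neg, abs_of_pos ht]; exact hhi.trans ((div_le_one hn0).mpr hn)
  calc |q - (1 - α / n)| = |(exp (-t) - 1 - -t) + (α / n - t)| := by rw [hqt]; ring_nf
    _ ≤ |exp (-t) - 1 - -t| + |α / n - t| := abs_add_le _ _
    _ ≤ t ^ 2 + 3 / n ^ 2 := by
      gcongr
      · simpa using abs_exp_sub_one_sub_id_le ht1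
      · rw [abs_of_nonneg (by linarith)]; linarith
    _ ≤ (α / n) ^ 2 + 3 / n ^ 2 := by gcongr
    _ = (π ^ 2 / 6 + 3) / n ^ 2 := by rw [div_pow, hα2, add_div]

lemma one_div_sq_isBigO_log_div_sq :
    (fun N : ℕ => 1 / (N : ℝ) ^ 2) =O[atTop] fun N : ℕ => log N / (N : ℝ) ^ 2 := by
  refine IsBigO.of_bound 1 ?_
  filter_upwards [(tendsto_log_atTop.comp tendsto_natCast_atTop_atTop).eventually_ge_atTop 1]
    with N (hN : 1 ≤ log N)
  rw [one_mul, norm_of_nonneg (by positivity), norm_of_nonneg (by positivity)]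
  gcongr

theorem epsilonN_asymptotics_U (ε : ℕ → ℝ) (N₀ : ℕ)
    (hmem : ∀ N ≥ N₀, ε N ∈ Set.Ioo (0 : ℝ) 1)
    (heq : ∀ N ≥ N₀, ∑' m : ℕ, (ε N) ^ (m + 1) / (1 - (ε N) ^ (m + 1)) ^ 2 = (N : ℝ) ^ 2) :
    (fun N : ℕ => ε N - (1 - (Real.pi / Real.sqrt 6) / N))
      =O[Filter.atTop] (fun N : ℕ => Real.log N / (N : ℝ) ^ 2) := by
  have hbound : ∀ᶠ N : ℕ in atTop,
      ‖ε N - (1 - π / √6 / N)‖ ≤ (π ^ 2 / 6 + 3) * ‖1 / (N : ℝ) ^ 2‖ := by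
    filter_upwards [eventually_ge_atTop N₀,
      tendsto_natCast_atTop_atTop.eventually_ge_atTop (π / √6)] with N hN hNα
    rw [norm_eq_abs, norm_eq_abs, abs_of_nonneg (a := 1 / (N : ℝ) ^ 2) (by positivity),
      mul_one_div]
    exact abs_sub_one_sub_le_of_expectedSize_eq (hmem N hN) hNα (heq N hN)
  exact (IsBigO.of_bound _ hbound).trans one_div_sq_isBigO_log_div_sq
end

section
/- Let ε(N) ∈ (0,1) be defined for large N by ∑_{m=1}^∞ (-1)^{m-1} ε(N)^m/(1-ε(N)^m)^2 = N^2. Then ε(N) = 1 - β/N + O(log N / N^2) as N → ∞, where β = π/√12. -/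
/-!
Write `u = 1 - q` and `F(q) = ∑_{n ≥ 1} q^n / (1 - q^n)^2`. Since `1 - q^n = u ∑_{j<n} q^j`,
Bernoulli's inequality and Cauchy–Schwarz give `q^n / n^2 ≤ u^2 q^n / (1 - q^n)^2 ≤ 1 / n^2`, so the
`n`-th term of `π^2/6 - u^2 F(q)` lies between `0` and `min (1/n^2) (u/n)`, and summing,
`0 ≤ π^2/6 - u^2 F(q) ≤ 4 u (1 - log u)`. Splitting the alternating sum `A(q)` into odd and even
`n` gives `A(q) = F(q) - 2 F(q^2)`, and as `1 - q^2 = u (1 + q)` this yields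
`|u^2 A(q) - π^2/12| ≤ 15 u (1 - log u)`.

For `q = ε(N)` we have `A(q) = N^2`. Since `u (1 - log u) ≤ 1`, the estimate first bounds `uN`,
so `u = O(1/N)`; as `u (1 - log u)` is increasing, it then gives `(uN)^2 = β^2 + O(log N / N)`,
hence `uN = β + O(log N / N)`.
-/

open Filter Finset Real Asymptotics

noncomputable def lambertSqTerm (q : ℝ) (n : ℕ) : ℝ := q ^ (n + 1) / (1 - q ^ (n + 1)) ^ 2

noncomputable def lambertSq (q : ℝ) : ℝ := ∑' n, lambertSqTerm q n

noncomputable def altLambertSq (q : ℝ) : ℝ :=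
  ∑' n : ℕ, (-1 : ℝ) ^ n * q ^ (n + 1) / (1 - q ^ (n + 1)) ^ 2

lemma one_sub_pow_le_mul_one_sub {q : ℝ} (hq : -1 ≤ q) (n : ℕ) : 1 - q ^ n ≤ n * (1 - q) := by
  have := one_add_mul_le_pow (a := q - 1) (by linarith) n
  rw [add_sub_cancel] at this
  linarith

lemma sq_mul_pow_le_geom_sum_sq {q : ℝ} (hq : 0 ≤ q) (n : ℕ) :
    ((n : ℝ) + 1) ^ 2 * q ^ n ≤ (∑ i ∈ range (n + 1), q ^ i) ^ 2 := by
  have hreflect : ∑ i ∈ range (n + 1), q ^ (n - i) = ∑ i ∈ range (n + 1), q ^ i :=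
    sum_range_reflect (q ^ ·) (n + 1)
  have hcs := sum_sq_le_sum_mul_sum_of_sq_le_mul (range (n + 1)) (r := fun _ => √(q ^ n))
    (f := (q ^ ·)) (g := fun i => q ^ (n - i)) (fun _ _ => by positivity)
    (fun _ _ => by positivity) fun i hi => by
      rw [sq_sqrt (by positivity), ← pow_add, Nat.add_sub_cancel' (mem_range_succ_iff.mp hi)]
  simpa [hreflect, mul_pow, sq_sqrt (pow_nonneg hq n), ← sq] using hcs

lemma mul_one_sub_log_le_mul_one_sub_log {a b : ℝ} (ha : 0 < a) (hab : a ≤ b) (hb : b ≤ 1) :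
    a * (1 - log a) ≤ b * (1 - log b) := by
  have hlog : a * (log b - log a) ≤ b - a := by
    rw [← log_div (by linarith) ha.ne', mul_comm]
    calc log (b / a) * a ≤ (b / a - 1) * a := by
          gcongr; exact log_le_sub_one_of_pos (div_pos (by linarith) ha)
      _ = b - a := by field_simp
  have : (b - a) * log b ≤ 0 :=
    mul_nonpos_of_nonneg_of_nonpos (by linarith) (log_nonpos (by linarith) hb)
  nlinarith

lemma hasSum_one_div_succ_sq : HasSum (fun n : ℕ => 1 / ((n : ℝ) + 1) ^ 2) (π ^ 2 / 6) := by
  simpa using (hasSum_nat_add_iff' 1).mpr hasSum_zeta_two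

lemma tsum_nat_add_le_of_le_one_div_sq {d : ℕ → ℝ} (hd0 : ∀ n, 0 ≤ d n)
    (hd_sq : ∀ n, d n ≤ 1 / ((n : ℝ) + 1) ^ 2) (M : ℕ) :
    ∑' n, d (n + M) ≤ 2 / ((M : ℝ) + 1) := by
  refine Real.tsum_le_of_sum_range_le (fun n => hd0 _) fun K => ?_
  have hIoo := sum_Ioo_inv_sq_le (α := ℝ) M (M + 1 + K)
  rw [← Finset.Ico_succ_left_eq_Ioo, Order.succ_eq_add_one, sum_Ico_eq_sum_range,
    Nat.add_sub_cancel_left] at hIoo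
  refine le_trans (sum_le_sum fun n _ => (hd_sq (n + M)).trans_eq ?_) hIoo
  push_cast
  ring_nf

lemma tsum_le_of_le_one_div_sq_of_le_div {u : ℝ} (hu0 : 0 < u) (hu1 : u ≤ 1) {d : ℕ → ℝ}
    (hd0 : ∀ n, 0 ≤ d n) (hd_sq : ∀ n, d n ≤ 1 / ((n : ℝ) + 1) ^ 2)
    (hd_div : ∀ n, d n ≤ u / ((n : ℝ) + 1)) :
    ∑' n, d n ≤ 4 * u * (1 - log u) := by
  set M := ⌈u⁻¹⌉₊
  have hM_ge : u⁻¹ ≤ M := Nat.le_ceil _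
  have hM_le : (M : ℝ) ≤ 2 / u := by
    have hceil := Nat.ceil_lt_add_one (inv_nonneg.mpr hu0.le)
    have hinv : 1 ≤ u⁻¹ := one_le_inv₀ hu0 |>.mpr hu1
    rw [div_eq_mul_inv]
    linarith
  have hM_pos : (0 : ℝ) < M := lt_of_lt_of_le (inv_pos.mpr hu0) hM_ge
  have hlog_u : 0 ≤ -log u := neg_nonneg.mpr (log_nonpos hu0.le hu1)
  have head : ∑ n ∈ range M, d n ≤ u * (2 - log u) := by
    have hharm : ∑ n ∈ range M, 1 / ((n : ℝ) + 1) ≤ 1 + log M := by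
      simpa [harmonic] using harmonic_le_one_add_log M
    have hlogM : log M ≤ 1 - log u := by
      calc log M ≤ log (2 / u) := log_le_log hM_pos hM_le
        _ = log 2 - log u := log_div two_ne_zero hu0.ne'
        _ ≤ 1 - log u := by linarith [log_two_lt_d9]
    calc ∑ n ∈ range M, d n ≤ ∑ n ∈ range M, u * (1 / ((n : ℝ) + 1)) :=
          sum_le_sum fun n _ => (hd_div n).trans_eq (mul_one_div u _).symm
      _ = u * ∑ n ∈ range M, 1 / ((n : ℝ) + 1) := (mul_sum ..).symm
      _ ≤ u * (2 - log u) := by gcongr; linarith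
  have tail : ∑' n, d (n + M) ≤ 2 * u := by
    calc ∑' n, d (n + M) ≤ 2 / ((M : ℝ) + 1) := tsum_nat_add_le_of_le_one_div_sq hd0 hd_sq M
      _ ≤ 2 * u := by
          rw [div_le_iff₀ (by positivity)]
          have : 1 ≤ M * u := by rwa [inv_le_iff_one_le_mul₀ hu0] at hM_ge
          nlinarith
  have hsum : Summable d := hasSum_one_div_succ_sq.summable.of_nonneg_of_le hd0 hd_sq
  rw [← hsum.sum_add_tsum_nat_add M]
  nlinarith

lemma sq_one_sub_mul_lambertSqTerm_le {q : ℝ} (hq0 : 0 ≤ q) (hq1 : q < 1) (n : ℕ) :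
    (1 - q) ^ 2 * lambertSqTerm q n ≤ 1 / ((n : ℝ) + 1) ^ 2 := by
  have hpos : 0 < 1 - q ^ (n + 1) := sub_pos.mpr (pow_lt_one₀ hq0 hq1 (by omega))
  have hgeom : 1 - q ^ (n + 1) = (1 - q) * ∑ i ∈ range (n + 1), q ^ i := by
    linear_combination geom_sum_mul q (n + 1)
  rw [lambertSqTerm, mul_div_assoc', div_le_div_iff₀ (by positivity) (by positivity), one_mul,
    hgeom]
  have hcs := sq_mul_pow_le_geom_sum_sq hq0 n
  have : ((n : ℝ) + 1) ^ 2 * q ^ (n + 1) ≤ (∑ i ∈ range (n + 1), q ^ i) ^ 2 := by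
    rw [pow_succ q n, ← mul_assoc]
    nlinarith [pow_nonneg hq0 n]
  nlinarith [sq_nonneg (1 - q)]

lemma pow_div_sq_le_sq_one_sub_mul_lambertSqTerm {q : ℝ} (hq0 : 0 ≤ q) (hq1 : q < 1)
    (n : ℕ) :
    q ^ (n + 1) / ((n : ℝ) + 1) ^ 2 ≤ (1 - q) ^ 2 * lambertSqTerm q n := by
  have hpos : 0 < 1 - q ^ (n + 1) := sub_pos.mpr (pow_lt_one₀ hq0 hq1 (by omega))
  have hbern : (1 - q ^ (n + 1)) ^ 2 ≤ ((n + 1) ^ 2 * (1 - q) ^ 2) := by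
    have := one_sub_pow_le_mul_one_sub (by linarith) (n + 1) (q := q)
    push_cast at this
    rw [← mul_pow]
    exact pow_le_pow_left₀ hpos.le this 2
  rw [lambertSqTerm, mul_div_assoc', div_le_div_iff₀ (by positivity) (by positivity)]
  nlinarith [pow_nonneg hq0 (n + 1)]

lemma summable_lambertSqTerm {q : ℝ} (hq0 : 0 ≤ q) (hq1 : q < 1) :
    Summable (lambertSqTerm q) := by
  have hu : 0 < (1 - q) ^ 2 := by nlinarith
  refine (hasSum_one_div_succ_sq.summable.div_const ((1 - q) ^ 2)).of_nonneg_of_le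
    (fun n => by unfold lambertSqTerm; positivity) fun n => ?_
  rw [le_div_iff₀ hu, mul_comm]
  exact sq_one_sub_mul_lambertSqTerm_le hq0 hq1 n

lemma lambertSq_bounds {q : ℝ} (hq0 : 0 ≤ q) (hq1 : q < 1) :
    0 ≤ π ^ 2 / 6 - (1 - q) ^ 2 * lambertSq q ∧
      π ^ 2 / 6 - (1 - q) ^ 2 * lambertSq q ≤ 4 * (1 - q) * (1 - log (1 - q)) := by
  have hdeficit : HasSum (fun n : ℕ => 1 / ((n : ℝ) + 1) ^ 2 - (1 - q) ^ 2 * lambertSqTerm q n)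
      (π ^ 2 / 6 - (1 - q) ^ 2 * lambertSq q) :=
    hasSum_one_div_succ_sq.sub ((summable_lambertSqTerm hq0 hq1).hasSum.mul_left _)
  rw [← hdeficit.tsum_eq]
  have hd0 n := sub_nonneg.mpr (sq_one_sub_mul_lambertSqTerm_le hq0 hq1 n)
  refine ⟨tsum_nonneg hd0, tsum_le_of_le_one_div_sq_of_le_div (by linarith) (by linarith)
    hd0 (fun n => ?_) fun n => ?_⟩
  all_goals have hlow := pow_div_sq_le_sq_one_sub_mul_lambertSqTerm hq0 hq1 n
  · linarith [div_nonneg (pow_nonneg hq0 (n + 1)) (sq_nonneg ((n : ℝ) + 1))]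
  · have hbern := one_sub_pow_le_mul_one_sub (by linarith) (n + 1) (q := q)
    push_cast at hbern
    have : (1 - q ^ (n + 1)) / ((n : ℝ) + 1) ^ 2 ≤ (1 - q) / ((n : ℝ) + 1) := by
      rw [div_le_div_iff₀ (by positivity) (by positivity)]
      nlinarith
    have : 1 / ((n : ℝ) + 1) ^ 2 - q ^ (n + 1) / ((n : ℝ) + 1) ^ 2
        = (1 - q ^ (n + 1)) / ((n : ℝ) + 1) ^ 2 := by ring
    linarith

lemma lambertSqTerm_sq (q : ℝ) (n : ℕ) :
    lambertSqTerm (q ^ 2) n = lambertSqTerm q (2 * n + 1) := by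
  simp only [lambertSqTerm, ← pow_mul]
  ring_nf

lemma altLambertSq_eq {q : ℝ} (hq0 : 0 ≤ q) (hq1 : q < 1) :
    altLambertSq q = lambertSq q - 2 * lambertSq (q ^ 2) := by
  have hg := summable_lambertSqTerm hq0 hq1
  have hf : Summable fun n : ℕ => (-1 : ℝ) ^ n * lambertSqTerm q n :=
    hg.of_norm_bounded fun n => by simp [lambertSqTerm, abs_of_nonneg hq0]
  have hsplit := tsum_even_add_odd (f := fun n : ℕ => (-1 : ℝ) ^ n * lambertSqTerm q n)
    (hf.comp_injective fun a b h => by simpa using h)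
    (hf.comp_injective fun a b h => by simpa using h)
  simp only [(even_two_mul _).neg_one_pow, (odd_two_mul_add_one _).neg_one_pow, one_mul,
    neg_one_mul, tsum_neg] at hsplit
  have heven_odd := tsum_even_add_odd (hg.comp_injective fun a b h => by simpa using h)
    (hg.comp_injective fun a b h => by simpa using h)
  have halt : altLambertSq q = ∑' n, (-1 : ℝ) ^ n * lambertSqTerm q n :=
    tsum_congr fun n => mul_div_assoc _ _ _
  rw [halt, lambertSq, lambertSq, tsum_congr (lambertSqTerm_sq q)]
  linarith

lemma abs_sq_mul_altLambertSq_sub_le {q : ℝ} (hq0 : 0 ≤ q) (hq1 : q < 1) :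
    |(1 - q) ^ 2 * altLambertSq q - π ^ 2 / 12| ≤ 15 * (1 - q) * (1 - log (1 - q)) := by
  have hq2 : q ^ 2 < 1 := by nlinarith
  obtain ⟨hE₁0, hE₁⟩ := lambertSq_bounds hq0 hq1
  obtain ⟨hE₂0, hE₂⟩ := lambertSq_bounds (sq_nonneg q) hq2
  set u := 1 - q
  set E₁ := π ^ 2 / 6 - u ^ 2 * lambertSq q
  set E₂ := π ^ 2 / 6 - (1 - q ^ 2) ^ 2 * lambertSq (q ^ 2)
  have hu : 0 < u := sub_pos.mpr hq1
  have hu₂ : 1 - q ^ 2 = u * (1 + q) := by ring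
  have hlog : 1 ≤ 1 - log u := by linarith [log_nonpos hu.le (by linarith : u ≤ 1)]
  have hu_le : u ≤ u * (1 - log u) := le_mul_of_one_le_right hu.le hlog
  -- `E₂` enters divided by `(1 + q) ^ 2`, which absorbs the change of scale from `1 - q ^ 2` to `u`
  have hE₂' : E₂ / (1 + q) ^ 2 ≤ 4 * u * (1 - log u) := by
    have hlog₂ : log u ≤ log (1 - q ^ 2) := log_le_log hu (by nlinarith)
    rw [div_le_iff₀ (by positivity)]
    rw [hu₂] at hE₂ hlog₂
    calc E₂ ≤ 4 * (u * (1 + q)) * (1 - log (u * (1 + q))) := hE₂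
      _ ≤ 4 * u * (1 - log u) * (1 + q) := by nlinarith
      _ ≤ 4 * u * (1 - log u) * (1 + q) ^ 2 := by gcongr; nlinarith
  -- `B = π ^ 2 / 6 * (2 / (1 + q) ^ 2 - 1 / 2)`: the cost of evaluating `2 / (1 + q) ^ 2` at 1
  set B := π ^ 2 * u * (3 + q) / (12 * (1 + q) ^ 2)
  have hB : 0 ≤ B ∧ B ≤ 3 * u := by
    refine ⟨by positivity, ?_⟩
    have hpi : π ^ 2 < 10 := by nlinarith [pi_lt_d2, pi_pos]
    have : π ^ 2 * (3 + q) ≤ 36 * (1 + q) ^ 2 := by nlinarith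
    rw [div_le_iff₀ (by positivity)]
    nlinarith
  have hdecomp : u ^ 2 * altLambertSq q - π ^ 2 / 12 = -B - E₁ + 2 * (E₂ / (1 + q) ^ 2) := by
    rw [altLambertSq_eq hq0 hq1]
    simp only [B, E₁, E₂, hu₂]
    field_simp
    ring
  rw [hdecomp, abs_le]
  constructor <;> linarith [div_nonneg hE₂0 (sq_nonneg (1 + q))]

lemma mul_one_sub_log_le_of_mul_le {u x : ℝ} (hu : 0 < u) (hx : 4 ≤ x) (hux : u * x ≤ 4) :
    u * (1 - log u) ≤ 4 * log x / x := by
  have hx0 : 0 < x := by linarith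
  have hlog4 : 1 < log 4 := by
    rw [lt_log_iff_exp_lt (by norm_num)]
    linarith [exp_one_lt_d9]
  calc u * (1 - log u) ≤ 4 / x * (1 - log (4 / x)) :=
        mul_one_sub_log_le_mul_one_sub_log hu (by rwa [le_div_iff₀ hx0])
          ((div_le_one hx0).mpr hx)
    _ = 4 / x * (1 - log 4 + log x) := by rw [log_div (by norm_num) hx0.ne']; ring
    _ ≤ 4 / x * log x := by gcongr; linarith
    _ = 4 * log x / x := by ring

lemma one_sub_mul_le_four_of_altLambertSq_eq {q x : ℝ} (hq0 : 0 ≤ q) (hq1 : q < 1)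
    (hA : altLambertSq q = x ^ 2) : (1 - q) * x ≤ 4 := by
  have hmain := abs_sq_mul_altLambertSq_sub_le hq0 hq1
  have hφ := mul_one_sub_log_le_mul_one_sub_log (sub_pos.mpr hq1) (by linarith) le_rfl
  rw [log_one] at hφ
  rw [hA] at hmain
  have hpi : π ^ 2 < 12 := by nlinarith [pi_lt_d2, pi_pos]
  nlinarith [(abs_le.mp hmain).2]

lemma abs_sub_one_sub_div_le {q x : ℝ} (hq0 : 0 ≤ q) (hq1 : q < 1) (hx : 4 ≤ x)
    (hA : altLambertSq q = x ^ 2) :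
    |q - (1 - π / √12 / x)| ≤ 60 / (π / √12) * (log x / x ^ 2) := by
  set β := π / √12
  have hβ : β ^ 2 = π ^ 2 / 12 := by rw [div_pow, sq_sqrt (by norm_num)]
  have hβ0 : 0 < β := by positivity
  have hux := one_sub_mul_le_four_of_altLambertSq_eq hq0 hq1 hA
  have hmain := abs_sq_mul_altLambertSq_sub_le hq0 hq1
  rw [hA, ← hβ, ← mul_pow] at hmain
  set u := 1 - q
  have hu : 0 < u := sub_pos.mpr hq1
  have hx0 : 0 < x := by linarith
  have hdist : |u * x - β| ≤ 60 * log x / x / β := by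
    rw [le_div_iff₀ hβ0]
    calc |u * x - β| * β ≤ |u * x - β| * (u * x + β) := by gcongr; linarith [mul_pos hu hx0]
      _ = |(u * x) ^ 2 - β ^ 2| := by
          rw [← abs_of_pos (by positivity : 0 < u * x + β), ← abs_mul]; ring_nf
      _ ≤ 15 * (u * (1 - log u)) := by rw [← mul_assoc]; exact hmain
      _ ≤ 15 * (4 * log x / x) := by gcongr; exact mul_one_sub_log_le_of_mul_le hu hx hux
      _ = 60 * log x / x := by ring
  have hsub : q - (1 - β / x) = -(u * x - β) / x := by field_simp; ring
  rw [hsub, abs_div, abs_neg, abs_of_pos hx0, div_le_iff₀ hx0]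
  calc |u * x - β| ≤ 60 * log x / x / β := hdist
    _ = 60 / β * (log x / x ^ 2) * x := by field_simp

theorem epsilonN_asymptotics_R (ε : ℕ → ℝ) (N₀ : ℕ)
    (hmem : ∀ N ≥ N₀, ε N ∈ Set.Ioo (0 : ℝ) 1)
    (heq : ∀ N ≥ N₀,
      ∑' m : ℕ, (-1 : ℝ) ^ m * (ε N) ^ (m + 1) / (1 - (ε N) ^ (m + 1)) ^ 2 = (N : ℝ) ^ 2) :
    (fun N : ℕ => ε N - (1 - (Real.pi / Real.sqrt 12) / N))
      =O[Filter.atTop] (fun N : ℕ => Real.log N / (N : ℝ) ^ 2) := by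
  refine IsBigO.of_bound (60 / (π / √12)) ?_
  filter_upwards [eventually_ge_atTop (max N₀ 4)] with N hN
  obtain ⟨hε0, hε1⟩ := hmem N (le_of_max_le_left hN)
  rw [norm_eq_abs, norm_of_nonneg (by positivity)]
  exact abs_sub_one_sub_div_le hε0.le hε1 (by exact_mod_cast le_of_max_le_right hN)
    (heq N (le_of_max_le_left hN))
end

section
/- The Vershik curve ψ_U(u) = -(1/α) log(1 - e^{-αu}), α = π/√6, is the unique solution in the class X_U of the ODE ψ'' + α ψ'(1-ψ') = 0, where X_U consists of C^1 functions ψ: (0,∞) → (0,∞) with ψ' < 0, lim_{u↓0} ψ(u) = ∞ and lim_{u→∞} ψ(u) = 0. -/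
/-!
Writing `g = ψ' / (ψ' - 1)`, the ODE becomes the linear equation `g' = -α g`, so
`g = K e^{-αu}`. Since `x ↦ x / (x - 1)` is an involution, `ψ'` is then the derivative of
`-(1/α) log (1 - K e^{-αu})`, and the limit `ψ → 0` at infinity fixes the additive constant.
Finally, for `K ≠ 1` this curve stays bounded as `u ↓ 0`, contradicting `ψ → ∞`;
hence `K = 1`.
-/

open Real Filter Set Topology

theorem IsOpen.exists_eq_mul_exp_of_hasDerivAt {s : Set ℝ} (hs : IsOpen s)
    (hs' : IsPreconnected s) {g : ℝ → ℝ} {c : ℝ}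
    (hg : ∀ x ∈ s, HasDerivAt g (c * g x) x) :
    ∃ K, ∀ x ∈ s, g x = K * exp (c * x) := by
  have hzero : ∀ x ∈ s, HasDerivAt (fun x => g x * exp (-c * x)) 0 x := fun x hx =>
    ((hg x hx).fun_mul (hasDerivAt_const_mul (-c)).exp).congr_deriv (by ring)
  obtain ⟨K, hK⟩ := hs.exists_is_const_of_deriv_eq_zero hs'
    (fun x hx => (hzero x hx).differentiableAt.differentiableWithinAt)
    (fun x hx => (hzero x hx).deriv)
  refine ⟨K, fun x hx => ?_⟩
  rw [← hK x hx, mul_assoc, ← exp_add, neg_mul, neg_add_cancel, exp_zero, mul_one]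

theorem eqOn_Ioi_of_hasDerivAt_of_tendsto_atTop {E : Type*} [NormedAddCommGroup E]
    [NormedSpace ℝ E] {f g : ℝ → E} {f' : ℝ → E} {a : ℝ} {L : E}
    (hf : ∀ x ∈ Ioi a, HasDerivAt f (f' x) x) (hg : ∀ x ∈ Ioi a, HasDerivAt g (f' x) x)
    (hfL : Tendsto f atTop (𝓝 L)) (hgL : Tendsto g atTop (𝓝 L)) : EqOn f g (Ioi a) := by
  obtain ⟨C, hC⟩ := isOpen_Ioi.exists_eq_add_of_deriv_eq isPreconnected_Ioi
    (fun x hx => (hf x hx).differentiableAt.differentiableWithinAt)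
    (fun x hx => (hg x hx).differentiableAt.differentiableWithinAt)
    (fun x hx => by simp only [(hf x hx).deriv, (hg x hx).deriv])
  have hgC : Tendsto f atTop (𝓝 (L + C)) :=
    (hgL.add_const C).congr' <| (eventually_gt_atTop a).mono fun x hx => (hC hx).symm
  have hC0 : C = 0 := by simpa using tendsto_nhds_unique hfL hgC
  intro x hx
  simpa [hC0] using hC hx

theorem hasDerivAt_div_sub_one_of_hasDerivAt_mul_sub_one {p : ℝ → ℝ} {α x : ℝ}
    (hp : HasDerivAt p (α * p x * (p x - 1)) x) (hx : p x ≠ 1) :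
    HasDerivAt (fun y => p y / (p y - 1)) (-α * (p x / (p x - 1))) x := by
  have hx' : p x - 1 ≠ 0 := sub_ne_zero.mpr hx
  refine (hp.fun_div (hp.sub_const 1) hx').congr_deriv ?_
  field_simp
  ring

/-- The Vershik curve `ψ_U` is `vershikCurve α 1`. -/
noncomputable def vershikCurve (α K u : ℝ) : ℝ :=
  -(1 / α) * log (1 - K * exp (-α * u))

section vershikCurve

variable {α K : ℝ}

theorem hasDerivAt_vershikCurve (hα : α ≠ 0) {u : ℝ} (hu : K * exp (-α * u) ≠ 1) :
    HasDerivAt (vershikCurve α K)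
      (K * exp (-α * u) / (K * exp (-α * u) - 1)) u := by
  have hne : 1 - K * exp (-α * u) ≠ 0 := sub_ne_zero.mpr hu.symm
  refine ((((hasDerivAt_const_mul (-α)).exp.const_mul K).const_sub 1).log hne).const_mul
    (-(1 / α)) |>.congr_deriv ?_
  have hne' : K * exp (-α * u) - 1 ≠ 0 := sub_ne_zero.mpr hu
  rw [show K * (exp (-α * u) * -α) = -α * (K * exp (-α * u)) by ring]
  generalize K * exp (-α * u) = q at hne hne' ⊢
  field_simp
  ring

theorem tendsto_vershikCurve_atTop (hα : 0 < α) :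
    Tendsto (vershikCurve α K) atTop (𝓝 0) := by
  have hexp : Tendsto (fun u => exp (-α * u)) atTop (𝓝 0) :=
    tendsto_exp_atBot.comp (tendsto_id.const_mul_atTop_of_neg (neg_neg_of_pos hα))
  have hlin : Tendsto (fun u => 1 - K * exp (-α * u)) atTop (𝓝 1) := by
    simpa using (hexp.const_mul K).const_sub 1
  have hlog := (continuousAt_log one_ne_zero).tendsto.comp hlin
  have := hlog.const_mul (-(1 / α))
  rwa [log_one, mul_zero] at this

theorem eq_one_of_tendsto_vershikCurve_nhdsGT_atTop
    (h : Tendsto (vershikCurve α K) (𝓝[>] 0) atTop) : K = 1 := by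
  by_contra hne
  have hat0 : 1 - K * exp (-α * 0) ≠ 0 := by simpa [sub_eq_zero] using Ne.symm hne
  have hcont0 : ContinuousAt (vershikCurve α K) 0 := by
    unfold vershikCurve
    fun_prop (disch := exact hat0)
  exact not_tendsto_nhds_of_tendsto_atTop h _ (hcont0.tendsto.mono_left nhdsWithin_le_nhds)

end vershikCurve

theorem vershik_curve_U_unique_general (α : ℝ) (hα : α = Real.pi / Real.sqrt 6)
    (ψ ψ' ψ'' : ℝ → ℝ)
    (hderiv : ∀ u > 0, HasDerivAt ψ (ψ' u) u)
    (hderiv2 : ∀ u > 0, HasDerivAt ψ' (ψ'' u) u)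
    (hneg : ∀ u > 0, ψ' u < 0)
    (hlim0 : Filter.Tendsto ψ (nhdsWithin 0 (Set.Ioi 0)) Filter.atTop)
    (hliminf : Filter.Tendsto ψ Filter.atTop (nhds 0))
    (hode : ∀ u > 0, ψ'' u + α * ψ' u * (1 - ψ' u) = 0) :
    ∀ u > 0, ψ u = -(1 / α) * Real.log (1 - Real.exp (-α * u)) := by
  have hα0 : 0 < α := hα ▸ by positivity
  set g : ℝ → ℝ := fun u => ψ' u / (ψ' u - 1) with hg_def
  have hg_lt : ∀ u > 0, g u < 1 := fun u hu =>
    (div_lt_one_of_neg (by linarith [hneg u hu])).mpr (by linarith)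
  obtain ⟨K, hK⟩ : ∃ K, ∀ u ∈ Ioi 0, g u = K * exp (-α * u) :=
    isOpen_Ioi.exists_eq_mul_exp_of_hasDerivAt isPreconnected_Ioi fun u (hu : 0 < u) =>
      hasDerivAt_div_sub_one_of_hasDerivAt_mul_sub_one (α := α)
        ((hderiv2 u hu).congr_deriv (by linarith [hode u hu])) (by linarith [hneg u hu])
  have hK_lt : ∀ u > 0, K * exp (-α * u) < 1 := fun u hu => hK u hu ▸ hg_lt u hu
  have hψ' : ∀ u > 0, ψ' u = g u / (g u - 1) := fun u hu => by
    have : ψ' u - 1 ≠ 0 := by linarith [hneg u hu]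
    simp only [hg_def]
    field_simp
    ring
  have hψ : EqOn ψ (vershikCurve α K) (Ioi 0) :=
    eqOn_Ioi_of_hasDerivAt_of_tendsto_atTop hderiv
      (fun u hu => by
        rw [hψ' u hu, hK u hu]
        exact hasDerivAt_vershikCurve hα0.ne' (hK_lt u hu).ne)
      hliminf (tendsto_vershikCurve_atTop hα0)
  have hK1 : K = 1 := eq_one_of_tendsto_vershikCurve_nhdsGT_atTop
    (hlim0.congr' (eventually_nhdsWithin_of_forall fun u hu => hψ hu))
  intro u hu
  rw [hψ hu, hK1, vershikCurve, one_mul]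

theorem vershik_curve_U_unique (α : ℝ) (hα : α = Real.pi / Real.sqrt 6)
    (ψ ψ' ψ'' : ℝ → ℝ)
    (hpos : ∀ u > 0, 0 < ψ u)
    (hderiv : ∀ u > 0, HasDerivAt ψ (ψ' u) u)
    (hderiv2 : ∀ u > 0, HasDerivAt ψ' (ψ'' u) u)
    (hcont : ContinuousOn ψ' (Set.Ioi 0))
    (hneg : ∀ u > 0, ψ' u < 0)
    (hlim0 : Filter.Tendsto ψ (nhdsWithin 0 (Set.Ioi 0)) Filter.atTop)
    (hliminf : Filter.Tendsto ψ Filter.atTop (nhds 0))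
    (hode : ∀ u > 0, ψ'' u + α * ψ' u * (1 - ψ' u) = 0) :
    ∀ u > 0, ψ u = -(1 / α) * Real.log (1 - Real.exp (-α * u)) :=
  vershik_curve_U_unique_general α hα ψ ψ' ψ'' hderiv hderiv2 hneg hlim0 hliminf hode
end

section
/- The map Φ_U defined by Φ_U(ψ)(v) = -ψ'(G_ψ^{-1}(v))/(1 - ψ'(G_ψ^{-1}(v))), with G_ψ(u) = u - ψ(u), is a bijection from X_U to Y_U, with inverse Ψ_U(ρ)(u) = ζ_ρ^+((ζ_ρ^-)^{-1}(u)) where ζ_ρ^-(v) = ∫_{-∞}^v (1-ρ(v'))dv' and ζ_ρ^+(v) = ∫_v^∞ ρ(v')dv'. -/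
/-- Membership in the class `X_U`. -/
def MemXU (ψ : ℝ → ℝ) : Prop :=
  (∀ u > (0:ℝ), 0 < ψ u) ∧
  (∀ u > (0:ℝ), DifferentiableAt ℝ ψ u) ∧
  ContinuousOn (deriv ψ) (Set.Ioi 0) ∧
  (∀ u > (0:ℝ), deriv ψ u < 0) ∧
  Filter.Tendsto ψ (nhdsWithin 0 (Set.Ioi 0)) Filter.atTop ∧
  Filter.Tendsto ψ Filter.atTop (nhds 0)

/-- Membership in the class `Y_U`. -/
def MemYU (ρ : ℝ → ℝ) : Prop :=
  Continuous ρ ∧ (∀ v : ℝ, ρ v ∈ Set.Ioo (0:ℝ) 1) ∧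
  MeasureTheory.IntegrableOn (fun v => 1 - ρ v) (Set.Iic 0) ∧
  MeasureTheory.IntegrableOn ρ (Set.Ici 0) ∧
  ∫ v in Set.Iic (0:ℝ), (1 - ρ v) = ∫ v in Set.Ici (0:ℝ), ρ v

/-- `G_ψ(u) = u - ψ(u)`. -/
noncomputable def Gpsi (ψ : ℝ → ℝ) : ℝ → ℝ := fun u => u - ψ u

/-- The map `Φ_U`. -/
noncomputable def PhiU (ψ : ℝ → ℝ) : ℝ → ℝ := fun v =>
  -(deriv ψ (Function.invFunOn (Gpsi ψ) (Set.Ioi 0) v)) /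
    (1 - deriv ψ (Function.invFunOn (Gpsi ψ) (Set.Ioi 0) v))

/-- `ζ_ρ^-(v) = ∫_{-∞}^v (1-ρ)`. -/
noncomputable def zetaMinus (ρ : ℝ → ℝ) : ℝ → ℝ := fun v => ∫ v' in Set.Iio v, (1 - ρ v')

/-- `ζ_ρ^+(v) = ∫_v^∞ ρ`. -/
noncomputable def zetaPlus (ρ : ℝ → ℝ) : ℝ → ℝ := fun v => ∫ v' in Set.Ioi v, ρ v'

/-- The map `Ψ_U`. -/
noncomputable def PsiU (ρ : ℝ → ℝ) : ℝ → ℝ := fun u =>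
  zetaPlus ρ (Function.invFun (zetaMinus ρ) u)


/-!
Write `g = G_ψ⁻¹ : ℝ → (0, ∞)`. From `G_ψ (g v) = v` one gets `ψ ∘ g = g - id` and
`g' = 1 / (1 - ψ' ∘ g) = 1 - Φ_U(ψ)`, so `g` and `ψ ∘ g` are antiderivatives of `1 - Φ_U(ψ)` and
`-Φ_U(ψ)` vanishing at `-∞` and `+∞` respectively; hence `ζ^- = g` and `ζ^+ = ψ ∘ g` for `ρ = Φ_U(ψ)`, which gives both
`Φ_U(ψ) ∈ Y_U` and `Ψ_U(Φ_U(ψ)) = ψ`.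

Conversely, for `ρ ∈ Y_U` the function `ζ^- - ζ^+` has derivative `1` and vanishes at `0` by the
balance condition, so `ζ^- = id + ζ^+`. Then `Ψ_U(ρ) = ζ^+ ∘ (ζ^-)⁻¹ = id - (ζ^-)⁻¹` on `(0, ∞)`,
i.e. `G_{Ψ_U(ρ)} = (ζ^-)⁻¹`, and differentiating recovers `ρ`.
-/

open Set Filter Function Topology MeasureTheory

section InverseFunction

variable {f g : ℝ → ℝ} {s t : Set ℝ}

theorem Set.InvOn.strictMonoOn_of_bijOn (hinv : InvOn g f s t) (hbij : BijOn f s t)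
    (hf : StrictMonoOn f s) : StrictMonoOn g t := by
  have hg : MapsTo g t s := (hbij.symm hinv.symm).mapsTo
  intro y₁ hy₁ y₂ hy₂ h
  rwa [← hf.lt_iff_lt (hg hy₁) (hg hy₂), hinv.2 hy₁, hinv.2 hy₂]

theorem Set.InvOn.continuousOn_of_bijOn (hinv : InvOn g f s t) (hbij : BijOn f s t)
    (hf : StrictMonoOn f s) (hs : IsOpen s) (ht : IsOpen t) : ContinuousOn g t := by
  have hg : BijOn g t s := hbij.symm hinv.symm
  intro y hy
  refine ((hinv.strictMonoOn_of_bijOn hbij hf).continuousAt_of_image_mem_nhds (ht.mem_nhds hy)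
    ?_).continuousWithinAt
  rw [hg.image_eq]
  exact hs.mem_nhds (hg.mapsTo hy)

theorem Set.InvOn.hasDerivAt_of_bijOn (hinv : InvOn g f s t) (hbij : BijOn f s t)
    (hf : StrictMonoOn f s) (hs : IsOpen s) (ht : IsOpen t) {y f' : ℝ} (hy : y ∈ t)
    (hderiv : HasDerivAt f f' (g y)) (hf' : f' ≠ 0) : HasDerivAt g f'⁻¹ y :=
  hderiv.of_local_left_inverse
    ((hinv.continuousOn_of_bijOn hbij hf hs ht).continuousAt (ht.mem_nhds hy)) hf'
    (eventually_of_mem (ht.mem_nhds hy) hinv.2)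

end InverseFunction

section ImproperIntegral

theorem integral_Iic_of_hasDerivAt_of_nonneg {f f' : ℝ → ℝ} {a m : ℝ}
    (hderiv : ∀ x ∈ Iic a, HasDerivAt f (f' x) x) (hf' : ∀ x ∈ Iio a, 0 ≤ f' x)
    (hf : Tendsto f atBot (𝓝 m)) :
    IntegrableOn f' (Iic a) ∧ ∫ x in Iic a, f' x = f a - m := by
  -- reflect through `x ↦ -x` and use the `Ioi` versions
  have hderiv_neg : ∀ x ∈ Ici (-a), HasDerivAt (fun x => -f (-x)) (f' (-x)) x := fun x hx => by
    simpa [Function.comp_def] using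
      (hderiv (-x) (mem_Iic.2 (neg_le.1 hx))).neg.comp x (hasDerivAt_neg x)
  have hf'_neg : ∀ x ∈ Ioi (-a), 0 ≤ f' (-x) := fun x hx => hf' (-x) (mem_Iio.2 (neg_lt.1 hx))
  have hlim : Tendsto (fun x => -f (-x)) atTop (𝓝 (-m)) := (hf.comp tendsto_neg_atTop_atBot).neg
  constructor
  · have h := integrableOn_Ioi_deriv_of_nonneg' hderiv_neg hf'_neg hlim
    rw [← integrableOn_Ici_iff_integrableOn_Ioi] at h
    have hreflect : IntegrableOn f' (Iic a) (volume.map (MeasurableEquiv.neg ℝ)) :=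
      (integrableOn_map_equiv _).2 (by simpa [Function.comp_def] using h)
    rwa [show ⇑(MeasurableEquiv.neg ℝ) = Neg.neg from rfl, Measure.map_neg_eq_self] at hreflect
  · have h := integral_Ioi_of_hasDerivAt_of_nonneg' hderiv_neg hf'_neg hlim
    rw [integral_comp_neg_Ioi, neg_neg] at h
    rw [h]
    ring

variable {E : Type*} [NormedAddCommGroup E] {f : ℝ → E}

theorem Continuous.integrableOn_Iic_of_integrableOn_Iic (hf : Continuous f) {a : ℝ}
    (h : IntegrableOn f (Iic a)) (b : ℝ) : IntegrableOn f (Iic b) :=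
  (h.union hf.integrableOn_Icc).mono_set fun x hx =>
    (le_total x a).imp id fun hax => ⟨hax, hx⟩

theorem Continuous.integrableOn_Ioi_of_integrableOn_Ioi (hf : Continuous f) {a : ℝ}
    (h : IntegrableOn f (Ioi a)) (b : ℝ) : IntegrableOn f (Ioi b) :=
  (h.union hf.integrableOn_Icc).mono_set fun x hx =>
    (lt_or_ge a x).imp id fun hxa => ⟨le_of_lt hx, hxa⟩

theorem hasDerivAt_integral_Iic [NormedSpace ℝ E] [CompleteSpace E] (hf : Continuous f)
    (hi : ∀ a, IntegrableOn f (Iic a)) (b : ℝ) :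
    HasDerivAt (fun v => ∫ x in Iic v, f x) (f b) b := by
  have h : (fun v => ∫ x in Iic v, f x) = fun v => (∫ x in Iic b, f x) + ∫ x in b..v, f x :=
    funext fun v => by rw [← intervalIntegral.integral_Iic_sub_Iic (hi b) (hi v), add_sub_cancel]
  rw [h]
  exact (hf.integral_hasStrictDerivAt b b).hasDerivAt.const_add _

theorem tendsto_integral_Iic_atBot [NormedSpace ℝ E] {a : ℝ} (h : IntegrableOn f (Iic a)) :
    Tendsto (fun v => ∫ x in Iic v, f x) atBot (𝓝 0) := by
  have hlim := tendsto_setIntegral_of_antitone (μ := volume) (f := f) (ι := ℝᵒᵈ)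
    (s := fun v => Iic (OrderDual.ofDual v)) (fun _ => measurableSet_Iic)
    (fun _ _ h => Iic_subset_Iic.2 h) ⟨OrderDual.toDual a, h⟩
  have hempty : ⋂ v : ℝᵒᵈ, Iic (OrderDual.ofDual v) = ∅ :=
    eq_empty_of_forall_notMem fun x hx =>
      (sub_one_lt x).not_ge (mem_iInter.1 hx (OrderDual.toDual (x - 1)))
  rwa [hempty, Measure.restrict_empty, integral_zero_measure] at hlim

theorem tendsto_integral_Ioi_atTop [NormedSpace ℝ E] {a : ℝ} (h : IntegrableOn f (Ioi a)) :
    Tendsto (fun v => ∫ x in Ioi v, f x) atTop (𝓝 0) := by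
  have hlim := tendsto_setIntegral_of_antitone (μ := volume) (f := f) (s := Ioi)
    (fun _ => measurableSet_Ioi) (fun _ _ h => Ioi_subset_Ioi h) ⟨a, h⟩
  have hempty : ⋂ v : ℝ, Ioi v = ∅ :=
    eq_empty_of_forall_notMem fun x hx => (lt_add_one x).not_gt (mem_iInter.1 hx (x + 1))
  rwa [hempty, Measure.restrict_empty, integral_zero_measure] at hlim

end ImproperIntegral

noncomputable def GpsiInv (ψ : ℝ → ℝ) : ℝ → ℝ := invFunOn (Gpsi ψ) (Ioi 0)

namespace MemXU

variable {ψ : ℝ → ℝ}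

theorem hasDerivAt_Gpsi (hψ : MemXU ψ) {u : ℝ} (hu : 0 < u) :
    HasDerivAt (Gpsi ψ) (1 - deriv ψ u) u :=
  (hasDerivAt_id u).sub (hψ.2.1 u hu).hasDerivAt

theorem strictMonoOn_Gpsi (hψ : MemXU ψ) : StrictMonoOn (Gpsi ψ) (Ioi 0) :=
  strictMonoOn_of_deriv_pos (convex_Ioi 0)
    (fun _ hu => (hψ.hasDerivAt_Gpsi hu).continuousAt.continuousWithinAt) fun u hu => by
      rw [interior_Ioi] at hu
      rw [(hψ.hasDerivAt_Gpsi hu).deriv]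
      linarith [hψ.2.2.2.1 u hu]

theorem bijOn_Gpsi (hψ : MemXU ψ) : BijOn (Gpsi ψ) (Ioi 0) univ := by
  refine ⟨mapsTo_univ _ _, hψ.strictMonoOn_Gpsi.injOn, ?_⟩
  refine ContinuousOn.surjOn_of_tendsto nonempty_Ioi
    (fun _ hu => (hψ.hasDerivAt_Gpsi hu).continuousAt.continuousWithinAt) ?_ ?_
  · rw [tendsto_comp_coe_Ioi_atBot]
    exact ((tendsto_nhdsWithin_of_tendsto_nhds tendsto_id).add_atBot
      (tendsto_neg_atTop_atBot.comp hψ.2.2.2.2.1)).congr fun u => (sub_eq_add_neg u (ψ u)).symm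
  · rw [tendsto_comp_val_Ioi_atTop]
    exact (tendsto_id.atTop_add hψ.2.2.2.2.2.neg).congr fun u => (sub_eq_add_neg u (ψ u)).symm

theorem invOn_GpsiInv (hψ : MemXU ψ) : InvOn (GpsiInv ψ) (Gpsi ψ) (Ioi 0) univ :=
  hψ.bijOn_Gpsi.invOn_invFunOn

theorem GpsiInv_pos (hψ : MemXU ψ) (v : ℝ) : 0 < GpsiInv ψ v :=
  hψ.bijOn_Gpsi.surjOn.mapsTo_invFunOn (mem_univ v)

theorem GpsiInv_sub_self (hψ : MemXU ψ) (v : ℝ) : GpsiInv ψ v - v = ψ (GpsiInv ψ v) := by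
  have h : GpsiInv ψ v - ψ (GpsiInv ψ v) = v := hψ.invOn_GpsiInv.2 (mem_univ v)
  linarith

theorem strictMono_GpsiInv (hψ : MemXU ψ) : StrictMono (GpsiInv ψ) := fun _ _ h =>
  hψ.invOn_GpsiInv.strictMonoOn_of_bijOn hψ.bijOn_Gpsi hψ.strictMonoOn_Gpsi trivial trivial h

theorem deriv_GpsiInv_neg (hψ : MemXU ψ) (v : ℝ) : deriv ψ (GpsiInv ψ v) < 0 :=
  hψ.2.2.2.1 _ (hψ.GpsiInv_pos v)

theorem one_sub_PhiU (hψ : MemXU ψ) (v : ℝ) :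
    1 - PhiU ψ v = (1 - deriv ψ (GpsiInv ψ v))⁻¹ := by
  have h : 1 - deriv ψ (GpsiInv ψ v) ≠ 0 := by linarith [hψ.deriv_GpsiInv_neg v]
  rw [PhiU, ← GpsiInv]
  field_simp
  ring

theorem PhiU_mem_Ioo (hψ : MemXU ψ) (v : ℝ) : PhiU ψ v ∈ Ioo 0 1 := by
  have h := hψ.deriv_GpsiInv_neg v
  have h1 : 0 < 1 - deriv ψ (GpsiInv ψ v) := by linarith
  refine ⟨div_pos (neg_pos.2 h) h1, ?_⟩
  rw [PhiU, ← GpsiInv, div_lt_one h1]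
  linarith

theorem hasDerivAt_GpsiInv (hψ : MemXU ψ) (v : ℝ) : HasDerivAt (GpsiInv ψ) (1 - PhiU ψ v) v := by
  rw [hψ.one_sub_PhiU]
  exact hψ.invOn_GpsiInv.hasDerivAt_of_bijOn hψ.bijOn_Gpsi hψ.strictMonoOn_Gpsi isOpen_Ioi
    isOpen_univ (mem_univ v) (hψ.hasDerivAt_Gpsi (hψ.GpsiInv_pos v))
    (by linarith [hψ.deriv_GpsiInv_neg v])

theorem continuous_PhiU (hψ : MemXU ψ) : Continuous (PhiU ψ) := by
  have hg : Continuous (GpsiInv ψ) :=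
    continuous_iff_continuousAt.2 fun v => (hψ.hasDerivAt_GpsiInv v).continuousAt
  have hd : Continuous fun v => deriv ψ (GpsiInv ψ v) :=
    hψ.2.2.1.comp_continuous hg hψ.GpsiInv_pos
  exact hd.neg.div (continuous_const.sub hd)
    fun v => (sub_pos.2 ((hψ.deriv_GpsiInv_neg v).trans one_pos)).ne'

theorem tendsto_GpsiInv_atBot (hψ : MemXU ψ) : Tendsto (GpsiInv ψ) atBot (𝓝 0) := by
  have hrange : range (GpsiInv ψ) = Ioi 0 := by
    rw [← image_univ]
    exact (hψ.bijOn_Gpsi.symm hψ.invOn_GpsiInv.symm).image_eq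
  have h := tendsto_atBot_ciInf hψ.strictMono_GpsiInv.monotone
    ⟨0, fun _ ⟨v, hv⟩ => hv ▸ (hψ.GpsiInv_pos v).le⟩
  rwa [iInf, hrange, csInf_Ioi] at h

theorem tendsto_GpsiInv_atTop (hψ : MemXU ψ) : Tendsto (GpsiInv ψ) atTop atTop :=
  tendsto_atTop_atTop_of_monotone hψ.strictMono_GpsiInv.monotone fun b =>
    ⟨Gpsi ψ (max b 1), by
      rw [hψ.invOn_GpsiInv.1 (lt_of_lt_of_le one_pos (le_max_right b 1))]
      exact le_max_left b 1⟩

theorem integral_Iic_one_sub_PhiU (hψ : MemXU ψ) (v : ℝ) :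
    IntegrableOn (fun x => 1 - PhiU ψ x) (Iic v) ∧
      ∫ x in Iic v, (1 - PhiU ψ x) = GpsiInv ψ v := by
  simpa using integral_Iic_of_hasDerivAt_of_nonneg (fun x _ => hψ.hasDerivAt_GpsiInv x)
    (fun x _ => sub_nonneg.2 (hψ.PhiU_mem_Ioo x).2.le) hψ.tendsto_GpsiInv_atBot

theorem integral_Ioi_PhiU (hψ : MemXU ψ) (v : ℝ) :
    IntegrableOn (PhiU ψ) (Ioi v) ∧ ∫ x in Ioi v, PhiU ψ x = ψ (GpsiInv ψ v) := by
  have hderiv : ∀ x ∈ Ici v, HasDerivAt (fun x => x - GpsiInv ψ x) (PhiU ψ x) x := fun x _ => by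
    simpa using (hasDerivAt_id' x).fun_sub (hψ.hasDerivAt_GpsiInv x)
  have hnonneg : ∀ x ∈ Ioi v, 0 ≤ PhiU ψ x := fun x _ => (hψ.PhiU_mem_Ioo x).1.le
  have hlim : Tendsto (fun x => x - GpsiInv ψ x) atTop (𝓝 0) := by
    have h := (hψ.2.2.2.2.2.comp hψ.tendsto_GpsiInv_atTop).neg
    rw [neg_zero] at h
    refine h.congr fun x => ?_
    simp [← hψ.GpsiInv_sub_self x]
  refine ⟨integrableOn_Ioi_deriv_of_nonneg' hderiv hnonneg hlim, ?_⟩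
  rw [integral_Ioi_of_hasDerivAt_of_nonneg' hderiv hnonneg hlim, ← hψ.GpsiInv_sub_self]
  ring

theorem memYU_PhiU (hψ : MemXU ψ) : MemYU (PhiU ψ) := by
  refine ⟨hψ.continuous_PhiU, hψ.PhiU_mem_Ioo, (hψ.integral_Iic_one_sub_PhiU 0).1,
    (integrableOn_Ici_iff_integrableOn_Ioi).2 (hψ.integral_Ioi_PhiU 0).1, ?_⟩
  rw [(hψ.integral_Iic_one_sub_PhiU 0).2, integral_Ici_eq_integral_Ioi,
    (hψ.integral_Ioi_PhiU 0).2, ← hψ.GpsiInv_sub_self, sub_zero]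

theorem zetaMinus_PhiU (hψ : MemXU ψ) : zetaMinus (PhiU ψ) = GpsiInv ψ := funext fun v => by
  rw [zetaMinus, ← integral_Iic_eq_integral_Iio, (hψ.integral_Iic_one_sub_PhiU v).2]

theorem PsiU_PhiU (hψ : MemXU ψ) {u : ℝ} (hu : 0 < u) : PsiU (PhiU ψ) u = ψ u := by
  have h : GpsiInv ψ (invFun (GpsiInv ψ) u) = u := invFun_eq ⟨Gpsi ψ u, hψ.invOn_GpsiInv.1 hu⟩
  rw [PsiU, hψ.zetaMinus_PhiU, zetaPlus, (hψ.integral_Ioi_PhiU _).2, h]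

end MemXU

theorem zetaMinus_eq_integral_Iic (ρ : ℝ → ℝ) (v : ℝ) :
    zetaMinus ρ v = ∫ x in Iic v, (1 - ρ x) :=
  integral_Iic_eq_integral_Iio.symm

namespace MemYU

variable {ρ : ℝ → ℝ}

theorem integrableOn_one_sub_Iic (hρ : MemYU ρ) (a : ℝ) :
    IntegrableOn (fun v => 1 - ρ v) (Iic a) :=
  (continuous_const.sub hρ.1).integrableOn_Iic_of_integrableOn_Iic hρ.2.2.1 a

theorem integrableOn_Ioi (hρ : MemYU ρ) (a : ℝ) : IntegrableOn ρ (Ioi a) :=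
  hρ.1.integrableOn_Ioi_of_integrableOn_Ioi (hρ.2.2.2.1.mono_set Ioi_subset_Ici_self) a

theorem hasDerivAt_zetaMinus (hρ : MemYU ρ) (v : ℝ) : HasDerivAt (zetaMinus ρ) (1 - ρ v) v := by
  rw [show zetaMinus ρ = _ from funext (zetaMinus_eq_integral_Iic ρ)]
  exact hasDerivAt_integral_Iic (continuous_const.sub hρ.1) hρ.integrableOn_one_sub_Iic v

theorem zetaMinus_sub_zetaPlus (hρ : MemYU ρ) (v : ℝ) : zetaMinus ρ v - zetaPlus ρ v = v := by
  have hminus : zetaMinus ρ v - zetaMinus ρ 0 = ∫ x in (0:ℝ)..v, (1 - ρ x) := by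
    rw [zetaMinus_eq_integral_Iic, zetaMinus_eq_integral_Iic]
    exact intervalIntegral.integral_Iic_sub_Iic (hρ.integrableOn_one_sub_Iic 0)
      (hρ.integrableOn_one_sub_Iic v)
  have hplus : zetaPlus ρ 0 - zetaPlus ρ v = ∫ x in (0:ℝ)..v, ρ x :=
    intervalIntegral.integral_Ioi_sub_Ioi' (hρ.integrableOn_Ioi 0) (hρ.integrableOn_Ioi v)
  have hbalance : zetaMinus ρ 0 = zetaPlus ρ 0 := by
    rw [zetaMinus_eq_integral_Iic, hρ.2.2.2.2, integral_Ici_eq_integral_Ioi, zetaPlus]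
  have hsplit : ∫ x in (0:ℝ)..v, (1 - ρ x) = v - ∫ x in (0:ℝ)..v, ρ x := by
    rw [intervalIntegral.integral_sub intervalIntegrable_const (hρ.1.intervalIntegrable 0 v)]
    simp
  linarith

theorem hasDerivAt_zetaPlus (hρ : MemYU ρ) (v : ℝ) : HasDerivAt (zetaPlus ρ) (-ρ v) v := by
  have h : zetaPlus ρ = fun x => zetaMinus ρ x - x :=
    funext fun x => by linarith [hρ.zetaMinus_sub_zetaPlus x]
  rw [h]
  exact ((hρ.hasDerivAt_zetaMinus v).fun_sub (hasDerivAt_id' v)).congr_deriv (by ring)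

theorem strictMono_zetaMinus (hρ : MemYU ρ) : StrictMono (zetaMinus ρ) :=
  strictMono_of_deriv_pos fun v => by
    rw [(hρ.hasDerivAt_zetaMinus v).deriv]
    linarith [(hρ.2.1 v).2]

theorem strictAnti_zetaPlus (hρ : MemYU ρ) : StrictAnti (zetaPlus ρ) :=
  strictAnti_of_deriv_neg fun v => by
    rw [(hρ.hasDerivAt_zetaPlus v).deriv]
    linarith [(hρ.2.1 v).1]

theorem tendsto_zetaMinus_atBot (hρ : MemYU ρ) : Tendsto (zetaMinus ρ) atBot (𝓝 0) := by
  rw [show zetaMinus ρ = _ from funext (zetaMinus_eq_integral_Iic ρ)]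
  exact tendsto_integral_Iic_atBot (hρ.integrableOn_one_sub_Iic 0)

theorem tendsto_zetaPlus_atTop (hρ : MemYU ρ) : Tendsto (zetaPlus ρ) atTop (𝓝 0) :=
  tendsto_integral_Ioi_atTop (hρ.integrableOn_Ioi 0)

theorem zetaMinus_pos (hρ : MemYU ρ) (v : ℝ) : 0 < zetaMinus ρ v :=
  (hρ.strictMono_zetaMinus.monotone.le_of_tendsto hρ.tendsto_zetaMinus_atBot (v - 1)).trans_lt
    (hρ.strictMono_zetaMinus (sub_one_lt v))

theorem zetaPlus_pos (hρ : MemYU ρ) (v : ℝ) : 0 < zetaPlus ρ v :=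
  (hρ.strictAnti_zetaPlus.antitone.le_of_tendsto hρ.tendsto_zetaPlus_atTop (v + 1)).trans_lt
    (hρ.strictAnti_zetaPlus (lt_add_one v))

theorem bijOn_zetaMinus (hρ : MemYU ρ) : BijOn (zetaMinus ρ) univ (Ioi 0) := by
  refine ⟨fun v _ => hρ.zetaMinus_pos v, hρ.strictMono_zetaMinus.injective.injOn, fun u hu => ?_⟩
  obtain ⟨a, ha⟩ := (hρ.tendsto_zetaMinus_atBot.eventually (gt_mem_nhds hu)).exists
  have hu_lt : u < zetaMinus ρ u := by linarith [hρ.zetaMinus_sub_zetaPlus u, hρ.zetaPlus_pos u]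
  have hcont : Continuous (zetaMinus ρ) :=
    continuous_iff_continuousAt.2 fun v => (hρ.hasDerivAt_zetaMinus v).continuousAt
  obtain ⟨x, hx⟩ := intermediate_value_univ a u hcont ⟨ha.le, hu_lt.le⟩
  exact ⟨x, mem_univ x, hx⟩

theorem invOn_zetaMinus (hρ : MemYU ρ) :
    InvOn (invFun (zetaMinus ρ)) (zetaMinus ρ) univ (Ioi 0) :=
  ⟨fun v _ => leftInverse_invFun hρ.strictMono_zetaMinus.injective v, fun _ hu =>
    let ⟨x, _, hx⟩ := hρ.bijOn_zetaMinus.surjOn hu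
    invFun_eq ⟨x, hx⟩⟩

theorem strictMonoOn_invFun_zetaMinus (hρ : MemYU ρ) :
    StrictMonoOn (invFun (zetaMinus ρ)) (Ioi 0) :=
  hρ.invOn_zetaMinus.strictMonoOn_of_bijOn hρ.bijOn_zetaMinus (hρ.strictMono_zetaMinus.strictMonoOn univ)

theorem hasDerivAt_invFun_zetaMinus (hρ : MemYU ρ) {u : ℝ} (hu : 0 < u) :
    HasDerivAt (invFun (zetaMinus ρ)) (1 - ρ (invFun (zetaMinus ρ) u))⁻¹ u :=
  hρ.invOn_zetaMinus.hasDerivAt_of_bijOn hρ.bijOn_zetaMinus (hρ.strictMono_zetaMinus.strictMonoOn univ)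
    isOpen_univ isOpen_Ioi hu (hρ.hasDerivAt_zetaMinus _) (sub_pos.2 (hρ.2.1 _).2).ne'

theorem tendsto_invFun_zetaMinus_nhdsGT (hρ : MemYU ρ) :
    Tendsto (invFun (zetaMinus ρ)) (𝓝[>] 0) atBot := by
  rw [← tendsto_comp_coe_Ioi_atBot]
  exact tendsto_atBot_atBot_of_monotone
    (fun a b h => hρ.strictMonoOn_invFun_zetaMinus.monotoneOn a.2 b.2 h)
    fun b => ⟨⟨zetaMinus ρ b, hρ.zetaMinus_pos b⟩, (hρ.invOn_zetaMinus.1 (mem_univ b)).le⟩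

theorem tendsto_invFun_zetaMinus_atTop (hρ : MemYU ρ) :
    Tendsto (invFun (zetaMinus ρ)) atTop atTop := by
  rw [← tendsto_comp_val_Ioi_atTop (a := 0)]
  exact tendsto_atTop_atTop_of_monotone
    (fun a b h => hρ.strictMonoOn_invFun_zetaMinus.monotoneOn a.2 b.2 h)
    fun b => ⟨⟨zetaMinus ρ b, hρ.zetaMinus_pos b⟩, (hρ.invOn_zetaMinus.1 (mem_univ b)).ge⟩

theorem PsiU_eq (hρ : MemYU ρ) {u : ℝ} (hu : 0 < u) :
    PsiU ρ u = u - invFun (zetaMinus ρ) u := by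
  have h := hρ.zetaMinus_sub_zetaPlus (invFun (zetaMinus ρ) u)
  rw [hρ.invOn_zetaMinus.2 hu] at h
  rw [PsiU]
  linarith

theorem hasDerivAt_PsiU (hρ : MemYU ρ) {u : ℝ} (hu : 0 < u) :
    HasDerivAt (PsiU ρ) (1 - (1 - ρ (invFun (zetaMinus ρ) u))⁻¹) u :=
  ((hasDerivAt_id' u).fun_sub (hρ.hasDerivAt_invFun_zetaMinus hu)).congr_of_eventuallyEq
    (eventually_of_mem (isOpen_Ioi.mem_nhds hu) fun _ hx => hρ.PsiU_eq hx)

theorem memXU_PsiU (hρ : MemYU ρ) : MemXU (PsiU ρ) := by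
  have hw : ContinuousOn (invFun (zetaMinus ρ)) (Ioi 0) :=
    hρ.invOn_zetaMinus.continuousOn_of_bijOn hρ.bijOn_zetaMinus
      (hρ.strictMono_zetaMinus.strictMonoOn univ) isOpen_univ isOpen_Ioi
  have hρw : ∀ u, 0 < 1 - ρ (invFun (zetaMinus ρ) u) := fun u => sub_pos.2 (hρ.2.1 _).2
  refine ⟨fun u _ => hρ.zetaPlus_pos _, fun u hu => (hρ.hasDerivAt_PsiU hu).differentiableAt,
    ?_, fun u hu => ?_, ?_, ?_⟩
  · refine ContinuousOn.congr ?_ fun u hu => (hρ.hasDerivAt_PsiU hu).deriv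
    exact continuousOn_const.sub ((continuousOn_const.sub (hρ.1.comp_continuousOn hw)).inv₀
      fun u _ => (hρw u).ne')
  · rw [(hρ.hasDerivAt_PsiU hu).deriv, sub_neg, one_lt_inv₀ (hρw u)]
    linarith [(hρ.2.1 (invFun (zetaMinus ρ) u)).1]
  · have hbot : Tendsto (zetaPlus ρ) atBot atTop :=
      tendsto_atTop_mono (fun v => by linarith [hρ.zetaMinus_sub_zetaPlus v, hρ.zetaMinus_pos v])
        tendsto_neg_atBot_atTop
    exact hbot.comp hρ.tendsto_invFun_zetaMinus_nhdsGT
  · exact hρ.tendsto_zetaPlus_atTop.comp hρ.tendsto_invFun_zetaMinus_atTop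

theorem invFunOn_Gpsi_PsiU (hρ : MemYU ρ) (v : ℝ) :
    invFunOn (Gpsi (PsiU ρ)) (Ioi 0) v = zetaMinus ρ v := by
  have hG : EqOn (invFun (zetaMinus ρ)) (Gpsi (PsiU ρ)) (Ioi 0) := fun u hu => by
    rw [Gpsi, hρ.PsiU_eq hu]
    ring
  have hv := hρ.zetaMinus_pos v
  calc invFunOn (Gpsi (PsiU ρ)) (Ioi 0) v
      = invFunOn (Gpsi (PsiU ρ)) (Ioi 0) (Gpsi (PsiU ρ) (zetaMinus ρ v)) := by
        rw [← hG hv, hρ.invOn_zetaMinus.1 (mem_univ v)]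
    _ = zetaMinus ρ v := (hρ.strictMonoOn_invFun_zetaMinus.injOn.congr hG).leftInvOn_invFunOn hv

theorem PhiU_PsiU (hρ : MemYU ρ) (v : ℝ) : PhiU (PsiU ρ) v = ρ v := by
  have hd := (hρ.hasDerivAt_PsiU (hρ.zetaMinus_pos v)).deriv
  rw [hρ.invOn_zetaMinus.1 (mem_univ v)] at hd
  have h : 1 - ρ v ≠ 0 := (sub_pos.2 (hρ.2.1 v).2).ne'
  rw [PhiU, hρ.invFunOn_Gpsi_PsiU, hd]
  field_simp
  ring

end MemYU

theorem PhiU_bijection_XU_YU :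
    (∀ ψ : ℝ → ℝ, MemXU ψ →
      MemYU (PhiU ψ) ∧ ∀ u > (0:ℝ), PsiU (PhiU ψ) u = ψ u) ∧
    (∀ ρ : ℝ → ℝ, MemYU ρ →
      MemXU (PsiU ρ) ∧ ∀ v : ℝ, PhiU (PsiU ρ) v = ρ v) :=
  ⟨fun _ hψ => ⟨hψ.memYU_PhiU, fun _ => hψ.PsiU_PhiU⟩,
    fun _ hρ => ⟨hρ.memXU_PsiU, hρ.PhiU_PsiU⟩⟩
end
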